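/- For every n ≥ 0, the cardinality of M_2(n) equals the number of partitions of n into distinct parts. -/

import Mathlib

/-- The set `𝓜_e(n)` of partitions of `n`, written as weakly decreasing lists of positive
parts `a_1 ≥ a_2 ≥ … ≥ a_k > 0` with sum `n`, satisfying:
(i) `a_i` is even iff `e ∣ a_i`; (ii) `a_i - a_{i+1} ≤ 2e`;
(iii) `a_i = a_{i+1} → a_i` even; (iv) `a_i - a_{i+1} = 2e → a_i` odd; (v) `a_k < 2e`. -/
def MullSet (e n : ℕ) : Set (List ℕ) :=
  {L | L.Pairwise (· ≥ ·) ∧ (∀ a ∈ L, 0 < a) ∧ L.sum = n ∧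
    (∀ a ∈ L, (Even a ↔ e ∣ a)) ∧
    L.Chain' (fun a b => a - b ≤ 2 * e ∧ (a = b → Even a) ∧ (a - b = 2 * e → Odd a)) ∧
    ∀ a ∈ L.getLast?, a < 2 * e}

/-- predicate: all conditions of `MullSet 2` except the sum. -/
def P2 (L : List ℕ) : Prop :=
  L.Pairwise (· ≥ ·) ∧ (∀ a ∈ L, 0 < a) ∧
  L.Chain' (fun a b => a - b ≤ 4 ∧ (a = b → Even a) ∧ (a - b = 4 → Odd a)) ∧
  ∀ a ∈ L.getLast?, a < 4

lemma mem_mullSet_two {n : ℕ} {L : List ℕ} : L ∈ MullSet 2 n ↔ P2 L ∧ L.sum = n := by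
  simp only [MullSet, P2, Set.mem_setOf_eq]
  constructor
  · rintro ⟨h1, h2, h3, h4, h5, h6⟩
    refine ⟨⟨h1, h2, by simpa using h5, by simpa using h6⟩, h3⟩
  · rintro ⟨⟨h1, h2, h5, h6⟩, h3⟩
    exact ⟨h1, h2, h3, fun a _ => by rw [Nat.even_iff, Nat.dvd_iff_mod_eq_zero],
      by simpa using h5, by simpa using h6⟩

def g2 : ℕ → List ℕ
  | 0 => []
  | 1 => [1]
  | 2 => [2]
  | _ => [2, 1]

def phi2 : List ℕ → List ℕ
  | [] => []
  | a :: L => ((phi2 L).map (· + 2)) ++ g2 (a - 2 * (phi2 L).length)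

lemma g2_spec {m : ℕ} (hm : m ≤ 3) :
    (g2 m).Pairwise (· > ·) ∧ (∀ x ∈ g2 m, 0 < x ∧ x ≤ 2) ∧ (g2 m).sum = m ∧
      2 * (g2 m).length = m + m % 2 ∧ ((g2 m).getLast? = some 1 ↔ m % 2 = 1) ∧
      (g2 m = [] ↔ m = 0) := by
  interval_cases m <;> simp [g2]

lemma sum_map_add2 (l : List ℕ) : (l.map (· + 2)).sum = l.sum + 2 * l.length := by
  induction l with
  | nil => simp
  | cons a t ih => simp [ih]; ring

lemma P2_tail {a : ℕ} {L : List ℕ} (h : P2 (a :: L)) : P2 L := by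
  obtain ⟨h1, h2, h3, h4⟩ := h
  refine ⟨h1.of_cons, fun x hx => h2 x (List.mem_cons_of_mem _ hx), h3.tail, ?_⟩
  cases L with
  | nil => simp
  | cons b t => rw [← List.getLast?_cons_cons (a := a)]; exact h4

/-- The main invariants of `phi2` on `P2`-lists. -/
lemma phi2_spec : ∀ L : List ℕ, P2 L →
    (phi2 L).Pairwise (· > ·) ∧ (∀ x ∈ phi2 L, 0 < x) ∧ (phi2 L).sum = L.sum ∧
      2 * (phi2 L).length = L.headI + L.headI % 2 ∧
      ((phi2 L).getLast? = some 1 ↔ L.headI % 2 = 1) := by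
  intro L
  induction L with
  | nil => intro _; simp [phi2]
  | cons a L ih =>
    intro h
    obtain ⟨ih1, ih2, ih3, ih4, ih5⟩ := ih (P2_tail h)
    obtain ⟨hsort, hpos, hchain, hlast⟩ := h
    set s := (phi2 L).length with hs
    have ha1 : 0 < a := hpos a (by simp)
    -- key arithmetic : 2*s ≤ a and a - 2*s ≤ 3
    have key : 2 * s ≤ a ∧ a - 2 * s ≤ 3 := by
      cases L with
      | nil =>
        have : a < 4 := by have := hlast a; simp at this; omega
        simp [phi2] at hs
        omega
      | cons b t =>
        have hab : a ≥ b := (List.pairwise_cons.1 hsort).1 b (by simp)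
        obtain ⟨hc1, hc2, hc3⟩ := (List.isChain_cons_cons.1 hchain).1
        have h2s : 2 * s = b + b % 2 := by simpa using ih4
        rcases Nat.even_or_odd b with hb | hb
        · have hb2 : b % 2 = 0 := Nat.even_iff.1 hb
          by_cases h4 : a - b = 4
          · have := Nat.odd_iff.1 (hc3 h4)
            omega
          · omega
        · have hb2 : b % 2 = 1 := Nat.odd_iff.1 hb
          have hne : a ≠ b := by
            intro he
            have := Nat.even_iff.1 (hc2 he)
            omega
          omega
    obtain ⟨key1, key2⟩ := key
    set m := a - 2 * s with hm
    have hm3 : m ≤ 3 := key2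
    obtain ⟨g1, g2p, g3, g4, g5, g6⟩ := g2_spec hm3
    have hphi : phi2 (a :: L) = ((phi2 L).map (· + 2)) ++ g2 m := by
      simp [phi2, hm, hs]
    have hmapmem : ∀ x ∈ (phi2 L).map (· + 2), 3 ≤ x := by
      intro x hx
      obtain ⟨y, hy, rfl⟩ := List.mem_map.1 hx
      have := ih2 y hy; omega
    constructor
    · -- sorted
      rw [hphi, List.pairwise_append]
      refine ⟨?_, g1, ?_⟩
      · rw [List.pairwise_map]
        exact ih1.imp (by intro x y h; omega)
      · intro x hx y hy
        have := hmapmem x hx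
        have := (g2p y hy).2
        omega
    constructor
    · -- pos
      rw [hphi]
      intro x hx
      rcases List.mem_append.1 hx with hx | hx
      · have := hmapmem x hx; omega
      · exact (g2p x hx).1
    constructor
    · -- sum
      rw [hphi, List.sum_append, sum_map_add2, ih3, g3]
      simp only [List.sum_cons]
      omega
    constructor
    · -- length
      rw [hphi, List.length_append, List.length_map]
      have : 2 * ((g2 m).length) = m + m % 2 := g4
      simp only [List.headI]
      omega
    · -- getLast?
      simp only [List.headI]
      rw [hphi]
      by_cases hm0 : m = 0
      · have hg : g2 m = [] := g6.2 hm0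
        rw [hg, List.append_nil]
        have hL : phi2 L ≠ [] := by
          intro hnil
          have : s = 0 := by rw [hs, hnil]; simp
          omega
        constructor
        · intro hl
          exfalso
          have hmem : (1 : ℕ) ∈ (phi2 L).map (· + 2) := by
            obtain ⟨hne, heq⟩ := List.mem_getLast?_eq_getLast hl
            rw [heq]
            exact List.getLast_mem hne
          obtain ⟨y, hy, hy2⟩ := List.mem_map.1 hmem
          omega
        · intro hpar; omega
      · have hg : g2 m ≠ [] := fun hh => hm0 (g6.1 hh)
        rw [List.getLast?_append_of_ne_nil _ hg]
        rw [g5]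
        omega

lemma phi2_key {a : ℕ} {L : List ℕ} (h : P2 (a :: L)) :
    2 * (phi2 L).length ≤ a ∧ a - 2 * (phi2 L).length ≤ 3 := by
  obtain ⟨_, _, _, ih4, _⟩ := phi2_spec L (P2_tail h)
  obtain ⟨hsort, hpos, hchain, hlast⟩ := h
  have ha1 : 0 < a := hpos a (by simp)
  cases L with
  | nil =>
    have : a < 4 := by have := hlast a; simp at this; omega
    simp [phi2]
    omega
  | cons b t =>
    have hab : a ≥ b := (List.pairwise_cons.1 hsort).1 b (by simp)
    obtain ⟨hc1, hc2, hc3⟩ := (List.isChain_cons_cons.1 hchain).1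
    have h2s : 2 * (phi2 (b :: t)).length = b + b % 2 := by simpa using ih4
    rcases Nat.even_or_odd b with hb | hb
    · have hb2 : b % 2 = 0 := Nat.even_iff.1 hb
      by_cases h4 : a - b = 4
      · have := Nat.odd_iff.1 (hc3 h4)
        omega
      · omega
    · have hb2 : b % 2 = 1 := Nat.odd_iff.1 hb
      have hne : a ≠ b := by
        intro he
        have := Nat.even_iff.1 (hc2 he)
        omega
      omega

lemma phi2_recover {a : ℕ} {L : List ℕ} (h : P2 (a :: L)) :
    ((phi2 (a :: L)).filter (fun x => 3 ≤ x)).map (· - 2) = phi2 L := by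
  obtain ⟨_, hposL, _, _, _⟩ := phi2_spec L (P2_tail h)
  have hself : ((phi2 L).map (· + 2)).filter (fun x => 3 ≤ x) = (phi2 L).map (· + 2) := by
    apply List.filter_eq_self.2
    intro x hx
    obtain ⟨y, hy, rfl⟩ := List.mem_map.1 hx
    have := hposL y hy
    simpa using by omega
  have hnil : ∀ m ≤ 3, (g2 m).filter (fun x => 3 ≤ x) = [] := by
    intro m hm
    apply List.filter_eq_nil_iff.2
    intro x hx
    obtain ⟨_, _, _, _, _, _⟩ := g2_spec hm
    have := (g2_spec hm).2.1 x hx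
    simpa using by omega
  show ((((phi2 L).map (· + 2)) ++ g2 (a - 2 * (phi2 L).length)).filter (fun x => 3 ≤ x)).map (· - 2) = phi2 L
  rw [List.filter_append, hself, hnil _ (phi2_key h).2, List.append_nil, List.map_map]
  have : ((· - 2) ∘ (· + 2) : ℕ → ℕ) = id := by funext x; simp
  rw [this, List.map_id]

lemma phi2_inj : ∀ L1 L2 : List ℕ, P2 L1 → P2 L2 → phi2 L1 = phi2 L2 → L1 = L2 := by
  intro L1
  induction L1 with
  | nil =>
    intro L2 _ h2 heq
    cases L2 with
    | nil => rfl
    | cons b t =>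
      exfalso
      obtain ⟨_, _, hsum, _, _⟩ := phi2_spec (b :: t) h2
      rw [← heq] at hsum
      simp [phi2] at hsum
      have := h2.2.1 b (by simp)
      omega
  | cons a t1 ih =>
    intro L2 h1 h2 heq
    cases L2 with
    | nil =>
      exfalso
      obtain ⟨_, _, hsum, _, _⟩ := phi2_spec (a :: t1) h1
      rw [heq] at hsum
      simp [phi2] at hsum
      have := h1.2.1 a (by simp)
      omega
    | cons b t2 =>
      obtain ⟨_, _, _, hl1, hp1⟩ := phi2_spec (a :: t1) h1
      obtain ⟨_, _, _, hl2, hp2⟩ := phi2_spec (b :: t2) h2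
      rw [heq] at hl1 hp1
      simp only [List.headI] at hl1 hl2 hp1 hp2
      have hab : a = b := by
        have h1' := hp1.symm.trans hp2
        omega
      subst hab
      have htails : phi2 t1 = phi2 t2 := by
        rw [← phi2_recover h1, ← phi2_recover h2, heq]
      rw [ih t2 (P2_tail h1) (P2_tail h2) htails]

lemma P2_nil : P2 [] := ⟨List.Pairwise.nil, by simp, List.isChain_nil, by simp⟩

lemma sorted_split : ∀ μ : List ℕ, μ.Pairwise (· ≥ ·) →
    μ.filter (fun x => 3 ≤ x) ++ μ.filter (fun x => ¬ 3 ≤ x) = μ := by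
  intro μ
  induction μ with
  | nil => simp
  | cons x t ih =>
    intro hs
    by_cases hx : 3 ≤ x
    · have h1 : (x :: t).filter (fun x => 3 ≤ x) = x :: t.filter (fun x => 3 ≤ x) := by
        simp [List.filter_cons, hx]
      have h2 : (x :: t).filter (fun x => ¬ 3 ≤ x) = t.filter (fun x => ¬ 3 ≤ x) := by
        simp [List.filter_cons, hx]
      rw [h1, h2, List.cons_append, ih hs.of_cons]
    · have hall : ∀ y ∈ x :: t, ¬ 3 ≤ y := by
        intro y hy
        rcases List.mem_cons.1 hy with rfl | hy
        · exact hx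
        · have := List.rel_of_pairwise_cons hs (a' := y) hy; omega
      have h1 : (x :: t).filter (fun x => 3 ≤ x) = [] := by
        apply List.filter_eq_nil_iff.2
        intro y hy
        simpa using hall y hy
      have h2 : (x :: t).filter (fun x => ¬ 3 ≤ x) = x :: t := by
        apply List.filter_eq_self.2
        intro y hy
        simpa using hall y hy
      rw [h1, h2, List.nil_append]

lemma small_classify : ∀ B : List ℕ, B.Pairwise (· > ·) → (∀ x ∈ B, 0 < x ∧ x < 3) →
    B = [] ∨ B = [1] ∨ B = [2] ∨ B = [2, 1]
  | [], _, _ => Or.inl rfl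
  | [x], _, hm => by
    have := hm x (by simp)
    have : x = 1 ∨ x = 2 := by omega
    rcases this with rfl | rfl
    · exact Or.inr (Or.inl rfl)
    · exact Or.inr (Or.inr (Or.inl rfl))
  | x :: y :: t, hs, hm => by
    have hxy : x > y := (List.pairwise_cons.1 hs).1 y (by simp)
    have hx := hm x (by simp)
    have hy := hm y (by simp)
    have hx2 : x = 2 := by omega
    have hy1 : y = 1 := by omega
    cases t with
    | nil =>
      subst hx2; subst hy1
      exact Or.inr (Or.inr (Or.inr rfl))
    | cons z t' =>
      exfalso
      have hyz : y > z := List.rel_of_pairwise_cons ((List.pairwise_cons.1 hs).2) (a' := z) (by simp)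
      have hz := hm z (by simp)
      omega

lemma sum_bound : ∀ μ : List ℕ, (∀ x ∈ μ, 0 < x) →
    ((μ.filter (fun x => 3 ≤ x)).map (· - 2)).sum + μ.length ≤ μ.sum := by
  intro μ
  induction μ with
  | nil => simp
  | cons x t ih =>
    intro hp
    have ih' := ih (fun y hy => hp y (List.mem_cons_of_mem _ hy))
    have hx := hp x (by simp)
    by_cases hx3 : 3 ≤ x
    · have h1 : (x :: t).filter (fun x => 3 ≤ x) = x :: t.filter (fun x => 3 ≤ x) := by
        simp [List.filter_cons, hx3]
      rw [h1]
      simp only [List.map_cons, List.sum_cons, List.length_cons]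
      omega
    · have h1 : (x :: t).filter (fun x => 3 ≤ x) = t.filter (fun x => 3 ≤ x) := by
        simp [List.filter_cons, hx3]
      rw [h1]
      simp only [List.length_cons, List.sum_cons]
      omega

lemma phi2_surj : ∀ (N : ℕ) (μ : List ℕ), μ.sum ≤ N → μ.Pairwise (· > ·) →
    (∀ x ∈ μ, 0 < x) → ∃ L, P2 L ∧ phi2 L = μ := by
  intro N
  induction N with
  | zero =>
    intro μ hsum hs hp
    have hμ : μ = [] := by
      cases μ with
      | nil => rfl
      | cons x t =>
        exfalso
        have h1 := hp x (by simp)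
        have h2 : ∀ y ∈ t, 0 ≤ y := fun y _ => Nat.zero_le y
        simp only [List.sum_cons] at hsum
        omega
    subst hμ
    exact ⟨[], P2_nil, rfl⟩
  | succ N ih =>
    intro μ hsum hs hp
    cases hμe : μ with
    | nil => exact ⟨[], P2_nil, rfl⟩
    | cons x₀ t₀ =>
    rw [← hμe]
    have hne : μ ≠ [] := by rw [hμe]; simp
    set A := μ.filter (fun x => 3 ≤ x) with hA
    set B := μ.filter (fun x => ¬ 3 ≤ x) with hB
    have hsplit : A ++ B = μ := sorted_split μ (hs.imp le_of_lt)
    have hA3 : ∀ x ∈ A, 3 ≤ x := by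
      intro x hx
      have := (List.mem_filter.1 hx).2
      simpa using this
    have hAs : A.Pairwise (· > ·) := hs.filter _
    have hBs : B.Pairwise (· > ·) := hs.filter _
    have hBsmall : ∀ x ∈ B, 0 < x ∧ x < 3 := by
      intro x hx
      obtain ⟨hx1, hx2⟩ := List.mem_filter.1 hx
      have := hp x hx1
      simp at hx2
      omega
    set μ' := A.map (· - 2) with hμ'
    have hμ's : μ'.Pairwise (· > ·) := by
      rw [hμ', List.pairwise_map]
      exact hAs.imp_of_mem (by
        intro u v hu hv huv
        have := hA3 u hu
        have := hA3 v hv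
        omega)
    have hμ'p : ∀ x ∈ μ', 0 < x := by
      intro x hx
      obtain ⟨y, hy, rfl⟩ := List.mem_map.1 hx
      have := hA3 y hy
      omega
    have hμ'sum : μ'.sum ≤ N := by
      have h1 := sum_bound μ hp
      have h2 : 0 < μ.length := by rw [hμe]; exact Nat.succ_pos _
      rw [← hA, ← hμ'] at h1
      omega
    obtain ⟨L', hP', hphi'⟩ := ih μ' hμ'sum hμ's hμ'p
    have hBg : B.sum ≤ 3 ∧ g2 B.sum = B := by
      rcases small_classify B hBs hBsmall with h | h | h | h <;> rw [h] <;>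
        exact ⟨by norm_num, rfl⟩
    set a := B.sum + 2 * μ'.length with ha
    have hlen : (phi2 L').length = μ'.length := by rw [hphi']
    have hphia : phi2 (a :: L') = μ := by
      show ((phi2 L').map (· + 2)) ++ g2 (a - 2 * (phi2 L').length) = μ
      rw [hphi']
      have h1 : a - 2 * μ'.length = B.sum := by omega
      rw [h1, hBg.2]
      have h2 : μ'.map (· + 2) = A := by
        rw [hμ', List.map_map]
        have : ∀ y ∈ A, ((· + 2) ∘ (· - 2)) y = id y := by
          intro y hy
          have := hA3 y hy
          simp only [Function.comp, id]
          omega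
        rw [List.map_congr_left this, List.map_id]
      rw [h2, hsplit]
    refine ⟨a :: L', ?_, hphia⟩
    cases L' with
    | nil =>
      have hAnil : A = [] := by
        have : μ' = [] := by rw [← hphi']; rfl
        rw [hμ'] at this
        exact List.map_eq_nil_iff.1 this
      have hBμ : B = μ := by rw [← hsplit, hAnil, List.nil_append]
      have ha1 : 0 < a := by
        rw [ha]
        have : 0 < B.sum := by
          rw [hBμ, hμe]
          have := hp x₀ (by rw [hμe]; simp)
          simp only [List.sum_cons]
          omega
        omega
      have ha3 : a ≤ 3 := by
        rw [ha]
        have : μ'.length = 0 := by rw [hμ', hAnil]; simp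
        omega
      exact ⟨List.pairwise_singleton _ a, by simpa using ha1, List.isChain_singleton a,
        by simp; omega⟩
    | cons c t' =>
      obtain ⟨_, _, _, hl, _⟩ := phi2_spec (c :: t') hP'
      rw [hphi'] at hl
      simp only [List.headI] at hl
      have hc1 : 0 < c := hP'.2.1 c (by simp)
      have hBsum3 := hBg.1
      have hage : ∀ b ∈ c :: t', a ≥ b := by
        intro b hb
        rcases List.mem_cons.1 hb with rfl | hb
        · omega
        · have := List.rel_of_pairwise_cons hP'.1 (a' := b) hb
          omega
      refine ⟨List.pairwise_cons.2 ⟨hage, hP'.1⟩, ?_, ?_, ?_⟩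
      · intro y hy
        rcases List.mem_cons.1 hy with rfl | hy
        · omega
        · exact hP'.2.1 y hy
      · refine List.isChain_cons_cons.2 ⟨⟨?_, ?_, ?_⟩, hP'.2.2.1⟩
        · omega
        · intro he
          rw [Nat.even_iff]
          omega
        · intro he
          rw [Nat.odd_iff]
          omega
      · rw [List.getLast?_cons_cons]
        exact hP'.2.2.2

/-- The forward map of the bijection. -/
noncomputable def mullToDistinct (n : ℕ) (L : MullSet 2 n) :
    {p : n.Partition | p.parts.Nodup} :=
  ⟨⟨(phi2 L.1 : Multiset ℕ),
    fun {i} hi => (phi2_spec L.1 (mem_mullSet_two.1 L.2).1).2.1 i (Multiset.mem_coe.1 hi),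
    by
      rw [Multiset.sum_coe, (phi2_spec L.1 (mem_mullSet_two.1 L.2).1).2.2.1]
      exact (mem_mullSet_two.1 L.2).2⟩,
   by
    rw [Set.mem_setOf_eq]
    exact Multiset.coe_nodup.2 ((phi2_spec L.1 (mem_mullSet_two.1 L.2).1).1.imp ne_of_gt)⟩

lemma mullToDistinct_bijective (n : ℕ) : Function.Bijective (mullToDistinct n) := by
  haveI : Std.Antisymm (α := ℕ) (· > ·) := ⟨fun _ _ h1 h2 => absurd h1 (lt_asymm h2)⟩
  constructor
  · rintro ⟨L1, hL1⟩ ⟨L2, hL2⟩ h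
    have hparts : (phi2 L1 : Multiset ℕ) = (phi2 L2 : Multiset ℕ) := by
      have := congrArg (fun p => (p : {p : n.Partition | p.parts.Nodup}).1.parts) h
      simpa [mullToDistinct] using this
    have hperm : (phi2 L1).Perm (phi2 L2) := Multiset.coe_eq_coe.1 hparts
    have h1 := (phi2_spec L1 (mem_mullSet_two.1 hL1).1).1
    have h2 := (phi2_spec L2 (mem_mullSet_two.1 hL2).1).1
    have heq : phi2 L1 = phi2 L2 := List.Perm.eq_of_pairwise' h1 h2 hperm
    exact Subtype.ext (phi2_inj L1 L2 (mem_mullSet_two.1 hL1).1 (mem_mullSet_two.1 hL2).1 heq)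
  · rintro ⟨p, hp⟩
    set μ := p.parts.sort (· ≥ ·) with hμ
    have hcoe : (μ : Multiset ℕ) = p.parts := Multiset.sort_eq _ _
    have hsorted : μ.Pairwise (· ≥ ·) := Multiset.pairwise_sort _ _
    have hnodup : μ.Nodup := by
      rw [← Multiset.coe_nodup, hcoe]; exact hp
    have hstrict : μ.Pairwise (· > ·) :=
      (hsorted.and hnodup).imp fun ⟨h1, h2⟩ => lt_of_le_of_ne h1 (Ne.symm h2)
    have hpos : ∀ x ∈ μ, 0 < x := fun x hx =>
      p.parts_pos (by rw [← hcoe]; exact Multiset.mem_coe.2 hx)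
    have hsum : μ.sum = n := by
      rw [← Multiset.sum_coe, hcoe]; exact p.parts_sum
    obtain ⟨L, hPL, hphiL⟩ := phi2_surj μ.sum μ le_rfl hstrict hpos
    have hLmem : L ∈ MullSet 2 n := by
      rw [mem_mullSet_two]
      refine ⟨hPL, ?_⟩
      have := (phi2_spec L hPL).2.2.1
      rw [hphiL] at this
      omega
    refine ⟨⟨L, hLmem⟩, ?_⟩
    apply Subtype.ext
    apply Nat.Partition.ext
    show (phi2 L : Multiset ℕ) = p.parts
    rw [hphiL, hcoe]


/-- `|𝓜_2(n)|` is the number of partitions of `n` into distinct parts. -/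
theorem mullSet_card_two (n : ℕ) :
    (MullSet 2 n).ncard = {p : n.Partition | p.parts.Nodup}.ncard := by
  rw [← Nat.card_coe_set_eq, ← Nat.card_coe_set_eq]
  exact Nat.card_congr (Equiv.ofBijective _ (mullToDistinct_bijective n))
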